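/- arXiv:0802.1306 — 2 statements merged into one kernel-verified Lean document; each statement's English description precedes it below -/
import Mathlib

section
/- Let N be a finite set, Υ : N × N → ℝ a matrix, and ε ∈ [0,1]. For a nonempty U ⊆ N define the cohesion Υ(U) = min_{i,j ∈ U} max(Υ_{ij}, Υ_{ji}), and call U an ε-community if Υ(U) ≥ ε. Order ε-communities by U ⊑ V iff U ⊆ V and Υ(U) ≤ Υ(V). Then ⊑ is a partial order on the set of nonempty ε-communities, and every nonempty ⊑-directed family D of ε-communities has a least upper bound, namely its set-theoretic union ⋃D (which is itself an ε-community with Υ(⋃D) = Υ(U) for every U ∈ D). -/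
/-!
Cohesion is antitone under inclusion, so `U ⊑ W` forces `Υ(U) = Υ(W)`: all members of a
directed family share one cohesion `c`. Any two nodes of the union lie in a common member,
whose cohesion `c` bounds their attraction from below; hence the union has cohesion `c` too,
and it is the `⊑`-least upper bound.
-/

open Finset

/-- The cohesion `Υ(U) = min_{i,j ∈ U} max(Υ_{ij}, Υ_{ji})` of a nonempty finite set
of nodes `U` (junk value `0` for the empty set). -/
noncomputable def coh {N : Type*} [DecidableEq N] (Υ : N × N → ℝ) (U : Finset N) : ℝ :=
  if h : (U ×ˢ U).Nonempty then
    (U ×ˢ U).inf' h (fun p => max (Υ (p.1, p.2)) (Υ (p.2, p.1)))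
  else 0

section Cohesion

variable {N : Type*} [DecidableEq N] (Υ : N × N → ℝ)

lemma coh_le_of_mem {U : Finset N} {i j : N} (hi : i ∈ U) (hj : j ∈ U) :
    coh Υ U ≤ max (Υ (i, j)) (Υ (j, i)) := by
  have hp : (i, j) ∈ U ×ˢ U := mem_product.mpr ⟨hi, hj⟩
  rw [coh, dif_pos ⟨_, hp⟩]
  exact inf'_le _ hp

lemma le_coh {U : Finset N} {c : ℝ} (hU : U.Nonempty)
    (h : ∀ i ∈ U, ∀ j ∈ U, c ≤ max (Υ (i, j)) (Υ (j, i))) : c ≤ coh Υ U := by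
  rw [coh, dif_pos (hU.product hU)]
  exact le_inf' _ _ fun p hp => h p.1 (mem_product.mp hp).1 p.2 (mem_product.mp hp).2

lemma coh_anti {U V : Finset N} (hU : U.Nonempty) (h : U ⊆ V) : coh Υ V ≤ coh Υ U :=
  le_coh Υ hU fun _ hi _ hj => coh_le_of_mem Υ (h hi) (h hj)

lemma coh_eq_of_subset_of_le {U V : Finset N} (hU : U.Nonempty) (hsub : U ⊆ V)
    (hle : coh Υ U ≤ coh Υ V) : coh Υ U = coh Υ V :=
  le_antisymm hle (coh_anti Υ hU hsub)

lemma le_coh_sup_of_directed {D : Finset (Finset N)} {c : ℝ} (hne : (D.sup id).Nonempty)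
    (hdir : ∀ U ∈ D, ∀ V ∈ D, ∃ W ∈ D, U ⊆ W ∧ V ⊆ W) (hc : ∀ W ∈ D, c ≤ coh Υ W) :
    c ≤ coh Υ (D.sup id) := by
  refine le_coh Υ hne fun i hi j hj => ?_
  obtain ⟨U, hU, hiU⟩ := mem_sup.mp hi
  obtain ⟨V, hV, hjV⟩ := mem_sup.mp hj
  obtain ⟨W, hW, hUW, hVW⟩ := hdir U hU V hV
  exact (hc W hW).trans (coh_le_of_mem Υ (hUW hiU) (hVW hjV))

lemma coh_sup_eq_of_directed {D : Finset (Finset N)} (hne : ∀ U ∈ D, U.Nonempty)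
    (hdir : ∀ U ∈ D, ∀ V ∈ D, ∃ W ∈ D,
      (U ⊆ W ∧ coh Υ U ≤ coh Υ W) ∧ (V ⊆ W ∧ coh Υ V ≤ coh Υ W))
    {U : Finset N} (hU : U ∈ D) : coh Υ (D.sup id) = coh Υ U := by
  have hsub : U ⊆ D.sup id := le_sup (f := id) hU
  have hcoh_eq : ∀ V ∈ D, coh Υ U = coh Υ V := fun V hV => by
    obtain ⟨W, -, ⟨hUW, hUWc⟩, ⟨hVW, hVWc⟩⟩ := hdir U hU V hV
    rw [coh_eq_of_subset_of_le Υ (hne U hU) hUW hUWc,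
      coh_eq_of_subset_of_le Υ (hne V hV) hVW hVWc]
  refine le_antisymm (coh_anti Υ (hne U hU) hsub) (le_coh_sup_of_directed Υ
    ((hne U hU).mono hsub) (fun V hV W hW => ?_) fun W hW => (hcoh_eq W hW).le)
  obtain ⟨X, hX, ⟨hVX, -⟩, ⟨hWX, -⟩⟩ := hdir V hV W hW
  exact ⟨X, hX, hVX, hWX⟩

end Cohesion

theorem community_dcpo_general {N : Type*} [DecidableEq N] (Υ : N × N → ℝ) (ε : ℝ) :
    -- reflexivity
    (∀ U : Finset N, U.Nonempty → ε ≤ coh Υ U → U ⊆ U ∧ coh Υ U ≤ coh Υ U) ∧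
    -- antisymmetry
    (∀ U V : Finset N, U.Nonempty → ε ≤ coh Υ U → V.Nonempty → ε ≤ coh Υ V →
      (U ⊆ V ∧ coh Υ U ≤ coh Υ V) → (V ⊆ U ∧ coh Υ V ≤ coh Υ U) → U = V) ∧
    -- transitivity
    (∀ U V W : Finset N, U.Nonempty → ε ≤ coh Υ U → V.Nonempty → ε ≤ coh Υ V →
      W.Nonempty → ε ≤ coh Υ W →
      (U ⊆ V ∧ coh Υ U ≤ coh Υ V) → (V ⊆ W ∧ coh Υ V ≤ coh Υ W) →
      U ⊆ W ∧ coh Υ U ≤ coh Υ W) ∧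
    -- directed families have least upper bounds, given by unions
    (∀ D : Finset (Finset N), D.Nonempty →
      (∀ U ∈ D, U.Nonempty ∧ ε ≤ coh Υ U) →
      (∀ U ∈ D, ∀ V ∈ D, ∃ W ∈ D,
        (U ⊆ W ∧ coh Υ U ≤ coh Υ W) ∧ (V ⊆ W ∧ coh Υ V ≤ coh Υ W)) →
      -- the union is a nonempty ε-community
      (D.sup id).Nonempty ∧ ε ≤ coh Υ (D.sup id) ∧
      -- it is an upper bound
      (∀ U ∈ D, U ⊆ D.sup id ∧ coh Υ U ≤ coh Υ (D.sup id)) ∧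
      -- it is the least upper bound among ε-communities
      (∀ V : Finset N, V.Nonempty → ε ≤ coh Υ V →
        (∀ U ∈ D, U ⊆ V ∧ coh Υ U ≤ coh Υ V) →
        D.sup id ⊆ V ∧ coh Υ (D.sup id) ≤ coh Υ V) ∧
      -- its cohesion agrees with that of every member
      (∀ U ∈ D, coh Υ (D.sup id) = coh Υ U)) := by
  refine ⟨fun _ _ _ => ⟨subset_rfl, le_rfl⟩,
    fun _ _ _ _ _ _ hUV hVU => subset_antisymm hUV.1 hVU.1,
    fun _ _ _ _ _ _ _ _ _ hUV hVW => ⟨hUV.1.trans hVW.1, hUV.2.trans hVW.2⟩,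
    fun D ⟨U₀, hU₀⟩ hmem hdir => ?_⟩
  have hsub : ∀ U ∈ D, U ⊆ D.sup id := fun U hU => le_sup (f := id) hU
  have hcoh : ∀ U ∈ D, coh Υ (D.sup id) = coh Υ U := fun U hU =>
    coh_sup_eq_of_directed Υ (fun V hV => (hmem V hV).1) hdir hU
  exact ⟨(hmem U₀ hU₀).1.mono (hsub U₀ hU₀), (hmem U₀ hU₀).2.trans_eq (hcoh U₀ hU₀).symm,
    fun U hU => ⟨hsub U hU, (hcoh U hU).ge⟩,
    fun V _ _ hub => ⟨Finset.sup_le fun U hU => (hub U hU).1,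
      (hcoh U₀ hU₀).trans_le (hub U₀ hU₀).2⟩, hcoh⟩

/-- The relation `U ⊑ V ⇔ U ⊆ V ∧ Υ(U) ≤ Υ(V)` is a partial order on nonempty
`ε`-communities, and every directed family of `ε`-communities has a least upper
bound, namely its union, whose cohesion agrees with that of every member. -/
theorem community_dcpo {N : Type*} [Fintype N] [DecidableEq N] (Υ : N × N → ℝ)
    (ε : ℝ) (hε : ε ∈ Set.Icc (0 : ℝ) 1) :
    -- reflexivity
    (∀ U : Finset N, U.Nonempty → ε ≤ coh Υ U → U ⊆ U ∧ coh Υ U ≤ coh Υ U) ∧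
    -- antisymmetry
    (∀ U V : Finset N, U.Nonempty → ε ≤ coh Υ U → V.Nonempty → ε ≤ coh Υ V →
      (U ⊆ V ∧ coh Υ U ≤ coh Υ V) → (V ⊆ U ∧ coh Υ V ≤ coh Υ U) → U = V) ∧
    -- transitivity
    (∀ U V W : Finset N, U.Nonempty → ε ≤ coh Υ U → V.Nonempty → ε ≤ coh Υ V →
      W.Nonempty → ε ≤ coh Υ W →
      (U ⊆ V ∧ coh Υ U ≤ coh Υ V) → (V ⊆ W ∧ coh Υ V ≤ coh Υ W) →
      U ⊆ W ∧ coh Υ U ≤ coh Υ W) ∧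
    -- directed families have least upper bounds, given by unions
    (∀ D : Finset (Finset N), D.Nonempty →
      (∀ U ∈ D, U.Nonempty ∧ ε ≤ coh Υ U) →
      (∀ U ∈ D, ∀ V ∈ D, ∃ W ∈ D,
        (U ⊆ W ∧ coh Υ U ≤ coh Υ W) ∧ (V ⊆ W ∧ coh Υ V ≤ coh Υ W)) →
      -- the union is a nonempty ε-community
      (D.sup id).Nonempty ∧ ε ≤ coh Υ (D.sup id) ∧
      -- it is an upper bound
      (∀ U ∈ D, U ⊆ D.sup id ∧ coh Υ U ≤ coh Υ (D.sup id)) ∧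
      -- it is the least upper bound among ε-communities
      (∀ V : Finset N, V.Nonempty → ε ≤ coh Υ V →
        (∀ U ∈ D, U ⊆ V ∧ coh Υ U ≤ coh Υ V) →
        D.sup id ⊆ V ∧ coh Υ (D.sup id) ≤ coh Υ V) ∧
      -- its cohesion agrees with that of every member
      (∀ U ∈ D, coh Υ (D.sup id) = coh Υ U)) :=
  community_dcpo_general Υ ε
end

section
/- Let N be a finite nonempty set of cardinality n, M a row-stochastic matrix on N, d ∈ (0,1), and P the matrix with all entries P_{ij} = 1/n. Then the teleportation dynamics M^P = d·M + (1−d)·P is row-stochastic with all entries strictly positive, and it has a unique stationary distribution: there is exactly one probability vector r with r_j = Σ_i r_i M^P_{ij} for all j. -/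
/-!
Write `M^P = d M + (1 - d) P`, where every row of `P` is the uniform distribution `v`. For a
probability vector `r` we have `r P = v`, so `r = r M^P` becomes the affine equation
`r = d (r M) + (1 - d) v`. Right multiplication by a row-stochastic matrix does not increase the
`ℓ¹` norm, so `x ↦ d (x M)` is an `ℓ¹` contraction: `x - d (x M) = 0` forces `x = 0`. Hence the
affine equation has exactly one solution, and comparing the `ℓ¹` estimate for it with its sum
shows that this solution is a probability vector.
-/

open Finset Matrix

namespace Matrix

variable {n : Type*} [Fintype n] {M : Matrix n n ℝ} {d : ℝ}

section RowStochastic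

variable [DecidableEq n] {x b : n → ℝ}

theorem sum_vecMul_of_mem_rowStochastic (hM : M ∈ rowStochastic ℝ n) (x : n → ℝ) :
    ∑ j, (x ᵥ* M) j = ∑ i, x i := by
  rw [← dotProduct_one, ← dotProduct_one, ← dotProduct_mulVec, one_vecMul_of_mem_rowStochastic hM]

theorem sum_abs_vecMul_le_of_mem_rowStochastic (hM : M ∈ rowStochastic ℝ n) (x : n → ℝ) :
    ∑ j, |(x ᵥ* M) j| ≤ ∑ i, |x i| :=
  calc ∑ j, |(x ᵥ* M) j| ≤ ∑ j, (|x| ᵥ* M) j := sum_le_sum fun j _ =>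
        (abs_sum_le_sum_abs _ _).trans_eq <| sum_congr rfl fun i _ => by
          rw [abs_mul, abs_of_nonneg (nonneg_of_mem_rowStochastic hM), Pi.abs_apply]
    _ = ∑ i, |x i| := sum_vecMul_of_mem_rowStochastic hM |x|

theorem sum_of_eq_smul_vecMul_add (hM : M ∈ rowStochastic ℝ n) (hx : x = d • (x ᵥ* M) + b) :
    ∑ i, x i = d * ∑ i, x i + ∑ i, b i := by
  conv_lhs => rw [hx]
  simp only [Pi.add_apply, Pi.smul_apply, smul_eq_mul, sum_add_distrib, ← mul_sum,
    sum_vecMul_of_mem_rowStochastic hM]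

theorem sum_abs_le_of_eq_smul_vecMul_add (hM : M ∈ rowStochastic ℝ n) (hd : 0 ≤ d)
    (hx : x = d • (x ᵥ* M) + b) : ∑ i, |x i| ≤ d * ∑ i, |x i| + ∑ i, |b i| :=
  calc ∑ i, |x i| ≤ ∑ j, (d * |(x ᵥ* M) j| + |b j|) := by
        conv_lhs => rw [hx]
        refine sum_le_sum fun j _ => (abs_add_le _ _).trans_eq ?_
        rw [Pi.smul_apply, smul_eq_mul, abs_mul, abs_of_nonneg hd]
    _ ≤ d * ∑ i, |x i| + ∑ i, |b i| := by
        rw [sum_add_distrib, ← mul_sum]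
        gcongr d * ?_ + _
        exact sum_abs_vecMul_le_of_mem_rowStochastic hM x

theorem eq_zero_of_eq_smul_vecMul (hM : M ∈ rowStochastic ℝ n) (hd₀ : 0 ≤ d) (hd₁ : d < 1)
    (hx : x = d • (x ᵥ* M)) : x = 0 := by
  have hle := sum_abs_le_of_eq_smul_vecMul_add hM hd₀ (b := 0) (by rwa [add_zero])
  have hzero : ∑ i, |x i| = 0 := by
    simp only [Pi.zero_apply, abs_zero, sum_const_zero, add_zero] at hle
    nlinarith [sum_nonneg fun i (_ : i ∈ univ) => abs_nonneg (x i)]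
  ext i
  exact abs_eq_zero.1
    ((sum_eq_zero_iff_of_nonneg fun i _ => abs_nonneg (x i)).1 hzero i (mem_univ i))

theorem exists_eq_smul_vecMul_add (hM : M ∈ rowStochastic ℝ n) (hd₀ : 0 ≤ d) (hd₁ : d < 1)
    (b : n → ℝ) : ∃ x, x = d • (x ᵥ* M) + b := by
  have hinj : Function.Injective
      (LinearMap.id - d • M.vecMulLinear : (n → ℝ) →ₗ[ℝ] n → ℝ) := by
    rw [← LinearMap.ker_eq_bot, LinearMap.ker_eq_bot']
    exact fun x hx => eq_zero_of_eq_smul_vecMul hM hd₀ hd₁ (sub_eq_zero.1 hx)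
  obtain ⟨x, hx⟩ := LinearMap.injective_iff_surjective.1 hinj b
  exact ⟨x, sub_eq_iff_eq_add'.1 hx⟩

theorem nonneg_of_eq_smul_vecMul_add (hM : M ∈ rowStochastic ℝ n) (hd₀ : 0 ≤ d) (hd₁ : d < 1)
    (hb : 0 ≤ b) (hx : x = d • (x ᵥ* M) + b) : 0 ≤ x := by
  have habs := sum_abs_le_of_eq_smul_vecMul_add hM hd₀ hx
  have hsum := sum_of_eq_smul_vecMul_add hM hx
  simp only [abs_of_nonneg (hb _)] at habs
  -- `(1 - d) ∑ |x i| ≤ ∑ b i = (1 - d) ∑ x i`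
  have hle : ∑ i, |x i| ≤ ∑ i, x i := by nlinarith
  have heq := (sum_eq_sum_iff_of_le fun i _ => le_abs_self (x i)).1
    (hle.antisymm' (sum_le_sum fun i _ => le_abs_self (x i)))
  exact fun i => (heq i (mem_univ i)).symm ▸ abs_nonneg (x i)

theorem eq_of_eq_smul_vecMul_add (hM : M ∈ rowStochastic ℝ n) (hd₀ : 0 ≤ d) (hd₁ : d < 1)
    {y : n → ℝ} (hx : x = d • (x ᵥ* M) + b) (hy : y = d • (y ᵥ* M) + b) : x = y := by
  refine sub_eq_zero.1 (eq_zero_of_eq_smul_vecMul hM hd₀ hd₁ ?_)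
  calc x - y = d • (x ᵥ* M) + b - (d • (y ᵥ* M) + b) := by rw [← hx, ← hy]
    _ = d • ((x - y) ᵥ* M) := by rw [sub_vecMul, smul_sub]; abel

end RowStochastic

/-- `M^P` for the matrix `P` whose rows all equal `v`; the uniform `v` gives the paper's `P`. -/
def teleport (d : ℝ) (M : Matrix n n ℝ) (v : n → ℝ) : Matrix n n ℝ :=
  fun i j => d * M i j + (1 - d) * v j

theorem vecMul_teleport (v x : n → ℝ) :
    x ᵥ* teleport d M v = d • (x ᵥ* M) + ((1 - d) * ∑ i, x i) • v := by
  ext j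
  simp only [teleport, vecMul, dotProduct, mul_add, sum_add_distrib, mul_sum, sum_mul,
    Pi.add_apply, Pi.smul_apply, smul_eq_mul]
  congr 1 <;> exact sum_congr rfl fun i _ => by ring

theorem eq_vecMul_teleport_iff {v r : n → ℝ} (hr : ∑ i, r i = 1) :
    r = r ᵥ* teleport d M v ↔ r = d • (r ᵥ* M) + (1 - d) • v := by
  rw [vecMul_teleport, hr, mul_one]

variable [DecidableEq n] {v : n → ℝ}

theorem teleport_mem_rowStochastic (hM : M ∈ rowStochastic ℝ n) (hd₀ : 0 ≤ d) (hd₁ : d ≤ 1)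
    (hv : v ∈ stdSimplex ℝ n) : teleport d M v ∈ rowStochastic ℝ n := by
  refine mem_rowStochastic_iff_sum.2 ⟨fun i j => ?_, fun i => ?_⟩
  · exact add_nonneg (mul_nonneg hd₀ (nonneg_of_mem_rowStochastic hM))
      (mul_nonneg (sub_nonneg.2 hd₁) (hv.1 j))
  · simp only [teleport, sum_add_distrib, ← mul_sum, sum_row_of_mem_rowStochastic hM, hv.2]
    ring

theorem existsUnique_stationary_teleport (hM : M ∈ rowStochastic ℝ n) (hd₀ : 0 ≤ d)
    (hd₁ : d < 1) (hv : v ∈ stdSimplex ℝ n) :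
    ∃! r, r ∈ stdSimplex ℝ n ∧ r = r ᵥ* teleport d M v := by
  obtain ⟨r, hr⟩ := exists_eq_smul_vecMul_add hM hd₀ hd₁ ((1 - d) • v)
  have hsum : ∑ i, r i = 1 := by
    have := sum_of_eq_smul_vecMul_add hM hr
    simp only [Pi.smul_apply, smul_eq_mul, ← mul_sum, hv.2] at this
    nlinarith
  have hb : 0 ≤ (1 - d) • v := smul_nonneg (sub_nonneg.2 hd₁.le) hv.1
  refine ⟨r, ⟨⟨nonneg_of_eq_smul_vecMul_add hM hd₀ hd₁ hb hr, hsum⟩,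
    (eq_vecMul_teleport_iff hsum).2 hr⟩, fun s ⟨hs, hst⟩ => ?_⟩
  exact eq_of_eq_smul_vecMul_add hM hd₀ hd₁ ((eq_vecMul_teleport_iff hs.2).1 hst) hr

end Matrix

/-- The teleportation dynamics `M^P = d·M + (1−d)·P`, where `P` is the uniform
matrix with entries `1/n`, is row-stochastic with strictly positive entries, and
has a unique stationary distribution. -/
theorem teleportation_unique_stationary {N : Type*} [Fintype N] [Nonempty N]
    (M : N → N → ℝ)
    (hM0 : ∀ i j, 0 ≤ M i j) (hM1 : ∀ i, ∑ j, M i j = 1)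
    (d : ℝ) (hd : d ∈ Set.Ioo (0 : ℝ) 1) :
    (∀ i j, 0 < d * M i j + (1 - d) * (1 / (Fintype.card N : ℝ))) ∧
    (∀ i, ∑ j, (d * M i j + (1 - d) * (1 / (Fintype.card N : ℝ))) = 1) ∧
    (∃! r : N → ℝ, (∀ i, 0 ≤ r i) ∧ (∑ i, r i = 1) ∧
      ∀ j, r j = ∑ i, r i * (d * M i j + (1 - d) * (1 / (Fintype.card N : ℝ)))) := by
  classical
  obtain ⟨hd₀, hd₁⟩ := hd
  have hM : M ∈ rowStochastic ℝ N := mem_rowStochastic_iff_sum.2 ⟨hM0, hM1⟩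
  have hv := (stdSimplex.barycenter : stdSimplex ℝ N).2
  simp only [one_div]
  refine ⟨fun i j => ?_, sum_row_of_mem_rowStochastic
    (teleport_mem_rowStochastic hM hd₀.le hd₁.le hv), ?_⟩
  · exact add_pos_of_nonneg_of_pos (mul_nonneg hd₀.le (hM0 i j))
      (mul_pos (sub_pos.2 hd₁) (by positivity))
  · refine (existsUnique_congr fun r => ?_).1 (existsUnique_stationary_teleport hM hd₀.le hd₁ hv)
    simp only [stdSimplex, Set.mem_ofPred_eq, and_assoc, funext_iff]
    rfl
end
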